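/- Let S be a purely virtual magnetic graph with a finite set V of virtual crossings, where each virtual crossing v is an unordered pair of (not necessarily distinct) edges {e_v, e_v'}. Assume that for any two connected components C₁, C₂ of S, the number of virtual crossings pairing an edge of C₁ with an edge of C₂ is even. Then for any two weight maps τ and ω of S, the products ∏_{v∈V} τ(e_v)τ(e_v') and ∏_{v∈V} ω(e_v)ω(e_v') are equal. That is, the parity i(S) is independent of the choice of weight map. -/

import Mathlib

/-- The parity of a purely virtual magnetic graph is independent of the
choice of weight map.  Edges `E` carry an adjacency relation `adj`; connected
components are the classes of the reflexive-transitive closure of `adj`, recorded by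
`comp : E → C`.  Virtual crossings form a finite type `V`, crossing `v` pairing edges
`e₁ v` and `e₂ v`.  Assuming that for any two components the number of crossings
pairing an edge of one with an edge of the other is even, any two weight maps `τ, ω`
give the same parity product. -/
theorem stmt1 {E C V : Type*} [Fintype V] [DecidableEq C]
    (adj : E → E → Prop) (comp : E → C) (e₁ e₂ : V → E)
    (hcomp : ∀ e e' : E, comp e = comp e' ↔
      Relation.ReflTransGen (fun a b => adj a b ∨ adj b a) e e')
    (heven : ∀ c₁ c₂ : C, Even (Finset.univ.filter (fun v : V =>
      (comp (e₁ v) = c₁ ∧ comp (e₂ v) = c₂) ∨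
      (comp (e₁ v) = c₂ ∧ comp (e₂ v) = c₁)) : Finset V).card)
    (τ ω : E → ℤ)
    (hτ : ∀ e, τ e = 1 ∨ τ e = -1) (hω : ∀ e, ω e = 1 ∨ ω e = -1)
    (hτadj : ∀ e e', adj e e' → τ e' = -τ e)
    (hωadj : ∀ e e', adj e e' → ω e' = -ω e) :
    (∏ v : V, τ (e₁ v) * τ (e₂ v)) = ∏ v : V, ω (e₁ v) * ω (e₂ v) := by
  classical
  set σ : E → ℤ := fun e => τ e * ω e with hσdef
  -- σ is constant on components
  have hσcomp : ∀ e e' : E, comp e = comp e' → σ e = σ e' := by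
    intro e e' h
    rw [hcomp] at h
    induction h with
    | refl => rfl
    | tail _ hbc ih =>
      rename_i b c _
      have hτ' : τ c = -τ b := by
        rcases hbc with h | h
        · exact hτadj _ _ h
        · have := hτadj _ _ h; linarith
      have hω' : ω c = -ω b := by
        rcases hbc with h | h
        · exact hωadj _ _ h
        · have := hωadj _ _ h; linarith
      simp only [hσdef] at ih ⊢
      rw [hτ', hω', neg_mul_neg, ih]
  have hσpm : ∀ e, σ e = 1 ∨ σ e = -1 := by
    intro e
    rcases hτ e with h1 | h1 <;> rcases hω e with h2 | h2 <;>
      simp [hσdef, h1, h2]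
  have hτσ : ∀ e, σ e * ω e = τ e := by
    intro e
    rcases hω e with h | h <;> simp [hσdef, h]
  -- key: ∏ σ(e₁ v) σ(e₂ v) = 1
  have key : (∏ v : V, σ (e₁ v) * σ (e₂ v)) = 1 := by
    set f : V → Sym2 C := fun v => s(comp (e₁ v), comp (e₂ v)) with hf
    rw [← Finset.prod_fiberwise_of_maps_to
      (g := f) (t := Finset.univ.image f)
      (fun v _ => Finset.mem_image_of_mem f (Finset.mem_univ v))]
    apply Finset.prod_eq_one
    intro p hp
    obtain ⟨v₀, -, hv₀⟩ := Finset.mem_image.mp hp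
    set c₁ := comp (e₁ v₀) with hc₁
    set c₂ := comp (e₂ v₀) with hc₂
    have hfilter : (Finset.univ.filter (fun v => f v = p)) =
        Finset.univ.filter (fun v : V =>
          (comp (e₁ v) = c₁ ∧ comp (e₂ v) = c₂) ∨
          (comp (e₁ v) = c₂ ∧ comp (e₂ v) = c₁)) := by
      apply Finset.filter_congr
      intro v _
      rw [← hv₀]
      simp only [hf, Sym2.eq_iff]
      exact Iff.rfl
    have hconst : ∀ v ∈ Finset.univ.filter (fun v => f v = p),
        σ (e₁ v) * σ (e₂ v) = σ (e₁ v₀) * σ (e₂ v₀) := by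
      intro v hv
      rw [Finset.mem_filter] at hv
      have := hv.2
      rw [← hv₀] at this
      simp only [hf, Sym2.eq_iff] at this
      rcases this with ⟨h1, h2⟩ | ⟨h1, h2⟩
      · rw [hσcomp _ _ h1, hσcomp _ _ h2]
      · rw [hσcomp _ _ h1, hσcomp _ _ h2, mul_comm]
    rw [Finset.prod_congr rfl hconst, Finset.prod_const]
    have hcard : Even (Finset.univ.filter (fun v => f v = p)).card := by
      rw [hfilter]; exact heven c₁ c₂
    rcases hσpm (e₁ v₀) with h1 | h1 <;> rcases hσpm (e₂ v₀) with h2 | h2 <;>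
      simp [h1, h2, hcard.neg_one_pow]
  calc (∏ v : V, τ (e₁ v) * τ (e₂ v))
      = ∏ v : V, (σ (e₁ v) * σ (e₂ v)) * (ω (e₁ v) * ω (e₂ v)) := by
        apply Finset.prod_congr rfl
        intro v _
        rw [mul_mul_mul_comm, hτσ, hτσ]
    _ = (∏ v : V, σ (e₁ v) * σ (e₂ v)) * ∏ v : V, ω (e₁ v) * ω (e₂ v) := by
        rw [Finset.prod_mul_distrib]
    _ = ∏ v : V, ω (e₁ v) * ω (e₂ v) := by rw [key, one_mul]
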